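/- arXiv:1211.3835 — 4 statements merged into one kernel-verified Lean document; each statement's English description precedes it below -/
import Mathlib

section
/- Let C = {a₁,…,aₙ} with 0 < a₁ < … < aₙ < 1 and let μ_C be the Moser-Carleson-Chang tower on C (with C₋ = ∅). Then ‖∇μ_C‖₂² = 1 if n = 1, and 1 < ‖∇μ_C‖₂² < n if n ≥ 2. -/
open Real Finset

theorem sub_div_add_mem_Ioo {R : Type*} [Field R] [LinearOrder R] [IsStrictOrderedRing R]
    {σ : R} (hσ : 1 < σ) : (σ - 1) / (σ + 1) ∈ Set.Ioo 0 1 := by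
  have hden : 0 < σ + 1 := by linarith
  exact ⟨div_pos (by linarith) hden, (div_lt_one hden).mpr (by linarith)⟩

theorem one_lt_sqrt_log_inv_div_sqrt_log_inv {x y : ℝ} (hx : 0 < x) (hxy : x < y) (hy : y < 1) :
    1 < √(log x⁻¹) / √(log y⁻¹) := by
  have hlog_y : 0 < log y⁻¹ := by rw [log_inv]; linarith [log_neg (hx.trans hxy) hy]
  have hlog_lt : log y⁻¹ < log x⁻¹ := by rw [log_inv, log_inv]; linarith [log_lt_log hx hxy]
  rw [one_lt_div (sqrt_pos.mpr hlog_y)]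
  exact sqrt_lt_sqrt hlog_y.le hlog_lt

theorem Finset.sum_mem_Ioo_card {ι R : Type*} [Semiring R] [PartialOrder R]
    [IsStrictOrderedRing R] {s : Finset ι} (hs : s.Nonempty) {f : ι → R}
    (hf : ∀ i ∈ s, f i ∈ Set.Ioo 0 1) : ∑ i ∈ s, f i ∈ Set.Ioo 0 (#s : R) := by
  refine ⟨sum_pos (fun i hi => (hf i hi).1) hs, ?_⟩
  calc ∑ i ∈ s, f i < ∑ _i ∈ s, (1 : R) := sum_lt_sum_of_nonempty hs fun i hi => (hf i hi).2
    _ = #s := by simp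

theorem tower_energy_finite_C_general (n : ℕ) (a : ℕ → ℝ)
    (hmem : ∀ i, 1 ≤ i → i ≤ n → a i ∈ Set.Ioo (0:ℝ) 1)
    (hmono : ∀ i, 1 ≤ i → i < n → a i < a (i + 1))
    (E : ℝ)
    (hE : E = 1 + ∑ j ∈ Finset.Ico 1 n,
      (Real.sqrt (Real.log (a j)⁻¹) / Real.sqrt (Real.log (a (j + 1))⁻¹) - 1) /
      (Real.sqrt (Real.log (a j)⁻¹) / Real.sqrt (Real.log (a (j + 1))⁻¹) + 1)) :
    (n = 1 → E = 1) ∧ (2 ≤ n → 1 < E ∧ E < n) := by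
  set σ : ℕ → ℝ := fun j => √(log (a j)⁻¹) / √(log (a (j + 1))⁻¹)
  have hterm : ∀ j ∈ Ico 1 n, (σ j - 1) / (σ j + 1) ∈ Set.Ioo 0 1 := fun j hj => by
    obtain ⟨hj, hjn⟩ := mem_Ico.mp hj
    exact sub_div_add_mem_Ioo <| one_lt_sqrt_log_inv_div_sqrt_log_inv
      (hmem j hj hjn.le).1 (hmono j hj hjn) (hmem (j + 1) (by omega) hjn).2
  refine ⟨fun hn => by simp [hE, hn], fun hn => ?_⟩
  obtain ⟨hpos, hlt⟩ := sum_mem_Ioo_card (nonempty_Ico.mpr (by omega)) hterm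
  rw [Nat.card_Ico, Nat.cast_sub (by omega), Nat.cast_one] at hlt
  constructor <;> linarith

/-- For a finite set `C = {a₁,…,aₙ} ⊂ (0,1)` with `a₁ < … < aₙ`, the energy of the
Moser-Carleson-Chang tower, given by
`‖∇μ_C‖₂² = Σ_{j=0}^{n} (σⱼ−1)/(σⱼ+1) = 1 + Σ_{j=1}^{n-1} (σⱼ−1)/(σⱼ+1)`
(where `σⱼ = √(log(1/aⱼ))/√(log(1/a_{j+1}))`, the terms `j = 0` and `j = n` contributing
`0` and `1` respectively), satisfies: it equals `1` when `n = 1`, and lies strictly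
between `1` and `n` when `n ≥ 2`. -/
theorem tower_energy_finite_C (n : ℕ) (hn : 1 ≤ n) (a : ℕ → ℝ)
    (hmem : ∀ i, 1 ≤ i → i ≤ n → a i ∈ Set.Ioo (0:ℝ) 1)
    (hmono : ∀ i, 1 ≤ i → i < n → a i < a (i + 1))
    (E : ℝ)
    (hE : E = 1 + ∑ j ∈ Finset.Ico 1 n,
      (Real.sqrt (Real.log (a j)⁻¹) / Real.sqrt (Real.log (a (j + 1))⁻¹) - 1) /
      (Real.sqrt (Real.log (a j)⁻¹) / Real.sqrt (Real.log (a (j + 1))⁻¹) + 1)) :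
    (n = 1 → E = 1) ∧ (2 ≤ n → 1 < E ∧ E < n) :=
  tower_energy_finite_C_general n a hmem hmono E hE
end

section
/- Any Moser-Carleson-Chang tower μ_{C₊,C₋} satisfies ‖∇μ_{C₊,C₋}‖₂² ≥ 1, with equality if and only if C = C₊ ∪ C₋ consists of a single point. -/
open Real MeasureTheory Set

/-- `w` is a Moser-Carleson-Chang tower with positive set `Cp` and negative set `Cm`:
a continuous radial `H¹₀`-function on the unit disk equal to `±√(log(1/r)/(2π))`
on `Cp` (resp. `Cm`) and radially harmonic (affine in `log(1/r)`) on the intervals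
complementary to `C = Cp ∪ Cm` in `(0,1)`. -/
def IsSignedTower (Cp Cm : Set ℝ) (w : ℝ → ℝ) : Prop :=
  IsClosed Cp ∧ IsClosed Cm ∧ Disjoint Cp Cm ∧
  Cp ⊆ Set.Ioo 0 1 ∧ Cm ⊆ Set.Ioo 0 1 ∧ (Cp ∪ Cm).Nonempty ∧
  ContinuousOn w (Set.Ioc 0 1) ∧ w 1 = 0 ∧
  (∀ r ∈ Cp, w r = Real.sqrt (Real.log r⁻¹ / (2 * π))) ∧
  (∀ r ∈ Cm, w r = -Real.sqrt (Real.log r⁻¹ / (2 * π))) ∧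
  (∀ a b : ℝ, a < b → Set.Ioo a b ⊆ Set.Ioo 0 1 \ (Cp ∪ Cm) →
    ∃ A B : ℝ, ∀ r ∈ Set.Ioo a b, w r = A + B * Real.log r⁻¹) ∧
  MeasureTheory.IntegrableOn (fun r => (deriv w r) ^ 2 * r) (Set.Ioo 0 1) volume

/-!
Let `b = sup C ∈ C`. On the last gap `(b, 1)` the tower is `B log(1/r)`, since it vanishes at
`r = 1`, and matching `√(log(1/b)/2π)` at `b` forces `B² log(1/b) = 1/2π`. The energy of
`B log(1/r)` on `(b, 1)` is `2π B² log(1/b) = 1`, so the total energy is `1` plus the energy on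
`(0, b)`, which is nonnegative.

The latter vanishes exactly when `w' = 0` almost everywhere on `(0, b)`. A second point `c < b`
of `C` rules this out: either `(c, b) ⊆ C`, where `w = ±√(log(1/r)/2π)` (one sign, by
connectedness) is strictly monotone, or `(c, b)` contains a gap whose endpoints lie in `C` and
have values of different squares, so `w` is a nonconstant `A + B log(1/r)` there. Conversely, if
`C = {b}` then `w = A + B log(1/r)` on `(0, b)`, and integrability of the energy density `B²/r`
forces `B = 0`.
-/

lemma hasDerivAt_const_add_mul_log_inv (A B : ℝ) {r : ℝ} (hr : r ≠ 0) :
    HasDerivAt (fun s => A + B * log s⁻¹) (-B / r) r := by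
  have h : HasDerivAt (fun s => A + B * -log s) (B * -r⁻¹) r :=
    ((hasDerivAt_log hr).neg.const_mul B).const_add A
  simpa only [← log_inv, mul_neg, neg_mul, div_eq_mul_inv] using h

lemma deriv_eq_neg_div_of_eqOn_Ioo {w : ℝ → ℝ} {a b A B r : ℝ}
    (h : EqOn w (fun s => A + B * log s⁻¹) (Ioo a b)) (hr : r ∈ Ioo a b) (hr0 : r ≠ 0) :
    deriv w r = -B / r :=
  (h.deriv isOpen_Ioo hr).trans (hasDerivAt_const_add_mul_log_inv A B hr0).deriv

lemma deriv_sqrt_log_inv_div_ne_zero {c r : ℝ} (hc : 0 < c) (hr0 : 0 < r) (hr1 : r < 1) :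
    deriv (fun s => √(log s⁻¹ / c)) r ≠ 0 := by
  have hpos : 0 < log r⁻¹ / c := div_pos (log_pos ((one_lt_inv₀ hr0).mpr hr1)) hc
  have h : HasDerivAt (fun s => log s⁻¹ / c) (-1 / r / c) r := by
    simpa using (hasDerivAt_const_add_mul_log_inv 0 1 hr0.ne').div_const c
  rw [(h.sqrt hpos.ne').deriv]
  exact div_ne_zero (by simp [hr0.ne', hc.ne']) (by positivity)

lemma integral_Ioo_sq_div_mul_self {a b : ℝ} (ha : 0 < a) (hab : a ≤ b) (B : ℝ) :
    ∫ r in Ioo a b, (B / r) ^ 2 * r = B ^ 2 * log (b / a) := by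
  rw [← integral_Ioc_eq_integral_Ioo, ← intervalIntegral.integral_of_le hab,
    ← integral_inv_of_pos ha (ha.trans_le hab), ← intervalIntegral.integral_const_mul]
  refine intervalIntegral.integral_congr fun r hr => ?_
  have hr0 : r ≠ 0 := by
    rw [uIcc_of_le hab] at hr
    exact (ha.trans_le hr.1).ne'
  field_simp

lemma eq_zero_of_integrableOn_Ioo_zero_mul_inv {b B : ℝ} (hb : 0 < b)
    (h : IntegrableOn (fun r => B * r⁻¹) (Ioo 0 b)) : B = 0 := by
  by_contra hB
  have hinv : IntegrableOn (fun r : ℝ => r⁻¹) (Ioo 0 b) :=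
    IntegrableOn.congr_fun (h.const_mul B⁻¹) (fun r _ => by simp [hB]) measurableSet_Ioo
  rw [← intervalIntegrable_iff_integrableOn_Ioo_of_le hb.le, intervalIntegrable_inv_iff] at hinv
  rcases hinv with h0 | h0
  · exact hb.ne h0
  · exact h0 (by simp [hb.le])

theorem IsClosed.exists_gap {α : Type*} [ConditionallyCompleteLinearOrder α] [TopologicalSpace α]
    [OrderTopology α] {C : Set α} (hC : IsClosed C) {c d x : α} (hc : c ∈ C) (hd : d ∈ C)
    (hx : x ∈ Ioo c d) (hxC : x ∉ C) :
    ∃ a b, a ∈ C ∧ b ∈ C ∧ c ≤ a ∧ a < b ∧ b ≤ d ∧ Disjoint (Ioo a b) C := by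
  have hbddL : BddAbove (C ∩ Iic x) := ⟨x, fun y hy => hy.2⟩
  have hbddR : BddBelow (C ∩ Ici x) := ⟨x, fun y hy => hy.2⟩
  have ha := (hC.inter isClosed_Iic).csSup_mem ⟨c, hc, hx.1.le⟩ hbddL
  have hb := (hC.inter isClosed_Ici).csInf_mem ⟨d, hd, hx.2.le⟩ hbddR
  have hax : sSup (C ∩ Iic x) < x := ha.2.lt_of_ne fun h => hxC (h ▸ ha.1)
  have hxb : x < sInf (C ∩ Ici x) := hb.2.lt_of_ne' fun h => hxC (h ▸ hb.1)
  refine ⟨_, _, ha.1, hb.1, le_csSup hbddL ⟨hc, hx.1.le⟩, hax.trans hxb,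
    csInf_le hbddR ⟨hd, hx.2.le⟩, disjoint_left.mpr fun r hr hrC => ?_⟩
  rcases le_total r x with hrx | hrx
  · exact (le_csSup hbddL ⟨hrC, hrx⟩).not_gt hr.1
  · exact (csInf_le hbddR ⟨hrC, hrx⟩).not_gt hr.2

namespace IsSignedTower

variable {Cp Cm : Set ℝ} {w : ℝ → ℝ}

lemma isClosed_union (hw : IsSignedTower Cp Cm w) : IsClosed (Cp ∪ Cm) :=
  hw.1.union hw.2.1

lemma integrableOn (hw : IsSignedTower Cp Cm w) :
    IntegrableOn (fun r => deriv w r ^ 2 * r) (Ioo 0 1) :=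
  hw.2.2.2.2.2.2.2.2.2.2.2

lemma union_subset_Ioo (hw : IsSignedTower Cp Cm w) : Cp ∪ Cm ⊆ Ioo 0 1 :=
  union_subset hw.2.2.2.1 hw.2.2.2.2.1

lemma sSup_mem (hw : IsSignedTower Cp Cm w) : sSup (Cp ∪ Cm) ∈ Cp ∪ Cm :=
  hw.isClosed_union.csSup_mem hw.2.2.2.2.2.1 ⟨1, fun _ hr => (hw.union_subset_Ioo hr).2.le⟩

lemma le_sSup (hw : IsSignedTower Cp Cm w) {r : ℝ} (hr : r ∈ Cp ∪ Cm) :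
    r ≤ sSup (Cp ∪ Cm) :=
  le_csSup ⟨1, fun _ hr => (hw.union_subset_Ioo hr).2.le⟩ hr

lemma sq_apply_of_mem (hw : IsSignedTower Cp Cm w) {r : ℝ} (hr : r ∈ Cp ∪ Cm) :
    w r ^ 2 = log r⁻¹ / (2 * π) := by
  have hr01 := hw.union_subset_Ioo hr
  obtain ⟨-, -, -, -, -, -, -, -, hwp, hwm, -⟩ := hw
  have hlog : 0 ≤ log r⁻¹ / (2 * π) :=
    div_nonneg (log_pos ((one_lt_inv₀ hr01.1).mpr hr01.2)).le (by positivity)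
  rcases hr with hr | hr
  · rw [hwp r hr, sq_sqrt hlog]
  · rw [hwm r hr, neg_sq, sq_sqrt hlog]

lemma exists_eqOn_Icc_of_gap (hw : IsSignedTower Cp Cm w) {a b : ℝ} (ha : 0 < a) (hab : a < b)
    (hgap : Ioo a b ⊆ Ioo 0 1 \ (Cp ∪ Cm)) :
    ∃ A B : ℝ, EqOn w (fun r => A + B * log r⁻¹) (Icc a b) := by
  obtain ⟨-, -, -, -, -, -, hcont, -, -, -, haff, -⟩ := hw
  have hb1 : b ≤ 1 := ((Ioo_subset_Ioo_iff hab).1 (hgap.trans sdiff_subset)).2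
  obtain ⟨A, B, hAB⟩ := haff a b hab hgap
  refine ⟨A, B, EqOn.of_subset_closure hAB
    (hcont.mono fun r hr => ⟨ha.trans_le hr.1, hr.2.trans hb1⟩)
    ?_ Ioo_subset_Icc_self (closure_Ioo hab.ne).ge⟩
  exact fun r hr => (continuousAt_const.add (continuousAt_const.mul
    ((continuousAt_log (inv_ne_zero (ha.trans_le hr.1).ne')).comp
      (continuousAt_inv₀ (ha.trans_le hr.1).ne')))).continuousWithinAt

lemma integral_Ioo_sSup_one (hw : IsSignedTower Cp Cm w) :
    ∫ r in Ioo (sSup (Cp ∪ Cm)) 1, deriv w r ^ 2 * r = 1 / (2 * π) := by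
  set b := sSup (Cp ∪ Cm)
  have hb : b ∈ Ioo 0 1 := hw.union_subset_Ioo hw.sSup_mem
  have hgap : Ioo b 1 ⊆ Ioo 0 1 \ (Cp ∪ Cm) := fun r hr =>
    ⟨⟨hb.1.trans hr.1, hr.2⟩, fun hrC => (hw.le_sSup hrC).not_gt hr.1⟩
  obtain ⟨A, B, hAB⟩ := hw.exists_eqOn_Icc_of_gap hb.1 hb.2 hgap
  have hA : 0 = A := by simpa [hw.2.2.2.2.2.2.2.1] using hAB (right_mem_Icc.2 hb.2.le)
  have hwb : w b = B * log b⁻¹ := by simpa [← hA] using hAB (left_mem_Icc.2 hb.2.le)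
  have hL : 0 < log b⁻¹ := log_pos ((one_lt_inv₀ hb.1).mpr hb.2)
  have hB : B ^ 2 * log b⁻¹ = 1 / (2 * π) := by
    have h := hw.sq_apply_of_mem hw.sSup_mem
    rw [hwb] at h
    refine mul_right_cancel₀ hL.ne' ?_
    linear_combination h
  calc ∫ r in Ioo b 1, deriv w r ^ 2 * r = ∫ r in Ioo b 1, (B / r) ^ 2 * r := by
        refine setIntegral_congr_fun measurableSet_Ioo fun r hr => ?_
        rw [deriv_eq_neg_div_of_eqOn_Ioo (hAB.mono Ioo_subset_Icc_self) hr (hb.1.trans hr.1).ne',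
          neg_div, neg_sq]
    _ = 1 / (2 * π) := by rw [integral_Ioo_sq_div_mul_self hb.1 hb.2.le, one_div b, hB]

lemma energy_eq (hw : IsSignedTower Cp Cm w) :
    2 * π * ∫ r in Ioo 0 1, deriv w r ^ 2 * r
      = 2 * π * (∫ r in Ioo 0 (sSup (Cp ∪ Cm)), deriv w r ^ 2 * r) + 1 := by
  have hb := hw.union_subset_Ioo hw.sSup_mem
  have hdisj : Disjoint (Ioo 0 (sSup (Cp ∪ Cm))) (Ico (sSup (Cp ∪ Cm)) 1) :=
    (Iio_disjoint_Ici le_rfl).mono Ioo_subset_Iio_self Ico_subset_Ici_self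
  rw [← Ioo_union_Ico_eq_Ioo hb.1 hb.2.le, setIntegral_union hdisj measurableSet_Ico
    (hw.integrableOn.mono_set (Ioo_subset_Ioo_right hb.2.le))
    (hw.integrableOn.mono_set (Ico_subset_Ioo_left hb.1)), integral_Ico_eq_integral_Ioo,
    hw.integral_Ioo_sSup_one]
  field_simp

lemma deriv_ne_zero_of_Ioo_subset (hw : IsSignedTower Cp Cm w) {c d : ℝ}
    (hcd : Ioo c d ⊆ Cp ∪ Cm) {r : ℝ} (hr : r ∈ Ioo c d) : deriv w r ≠ 0 := by
  have hr01 := hw.union_subset_Ioo (hcd hr)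
  obtain ⟨hCp, hCm, hdisj, -, -, -, -, -, hwp, hwm, -⟩ := hw
  have hsign : Ioo c d ⊆ Cp ∨ Ioo c d ⊆ Cm := by
    by_contra! h
    obtain ⟨x, hx, hxp⟩ := not_subset.1 h.1
    obtain ⟨y, hy, hym⟩ := not_subset.1 h.2
    obtain ⟨z, -, hzp, hzm⟩ := isPreconnected_closed_iff.1 isPreconnected_Ioo Cp Cm hCp hCm hcd
      ⟨y, hy, (hcd hy).resolve_right hym⟩ ⟨x, hx, (hcd hx).resolve_left hxp⟩
    exact disjoint_left.1 hdisj hzp hzm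
  have hne := deriv_sqrt_log_inv_div_ne_zero (by positivity : (0 : ℝ) < 2 * π) hr01.1 hr01.2
  rcases hsign with hsub | hsub
  · rwa [EqOn.deriv (fun s hs => hwp s (hsub hs)) isOpen_Ioo hr]
  · rwa [EqOn.deriv (fun s hs => hwm s (hsub hs)) isOpen_Ioo hr, deriv.fun_neg, neg_ne_zero]

lemma deriv_ne_zero_of_gap (hw : IsSignedTower Cp Cm w) {a b : ℝ} (ha : a ∈ Cp ∪ Cm)
    (hb : b ∈ Cp ∪ Cm) (hab : a < b) (hgap : Disjoint (Ioo a b) (Cp ∪ Cm)) {r : ℝ}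
    (hr : r ∈ Ioo a b) : deriv w r ≠ 0 := by
  have ha01 := hw.union_subset_Ioo ha
  have hb01 := hw.union_subset_Ioo hb
  obtain ⟨A, B, hAB⟩ := hw.exists_eqOn_Icc_of_gap ha01.1 hab fun s hs =>
    ⟨⟨ha01.1.trans hs.1, hs.2.trans hb01.2⟩, disjoint_left.1 hgap hs⟩
  have hB : B ≠ 0 := by
    rintro rfl
    have hwab : w a = w b := by
      rw [hAB (left_mem_Icc.2 hab.le), hAB (right_mem_Icc.2 hab.le)]
      simp
    have h := hw.sq_apply_of_mem ha
    rw [hwab, hw.sq_apply_of_mem hb, div_left_inj' (by positivity), log_inv, log_inv,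
      neg_inj] at h
    exact hab.ne (log_injOn_pos ha01.1 hb01.1 h.symm)
  rw [deriv_eq_neg_div_of_eqOn_Ioo (hAB.mono Ioo_subset_Icc_self) hr (ha01.1.trans hr.1).ne']
  exact div_ne_zero (neg_ne_zero.2 hB) (ha01.1.trans hr.1).ne'

lemma exists_Ioo_deriv_ne_zero (hw : IsSignedTower Cp Cm w) {c d : ℝ} (hc : c ∈ Cp ∪ Cm)
    (hd : d ∈ Cp ∪ Cm) (hcd : c < d) :
    ∃ u v, u < v ∧ Ioo u v ⊆ Ioo c d ∧ ∀ r ∈ Ioo u v, deriv w r ≠ 0 := by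
  by_cases hsub : Ioo c d ⊆ Cp ∪ Cm
  · exact ⟨c, d, hcd, subset_rfl, fun r => hw.deriv_ne_zero_of_Ioo_subset hsub⟩
  obtain ⟨x, hx, hxC⟩ := not_subset.1 hsub
  obtain ⟨a, b, ha, hb, hca, hab, hbd, hgap⟩ := hw.isClosed_union.exists_gap hc hd hx hxC
  exact ⟨a, b, hab, Ioo_subset_Ioo hca hbd, fun r => hw.deriv_ne_zero_of_gap ha hb hab hgap⟩

lemma integral_pos_of_lt (hw : IsSignedTower Cp Cm w) {c d : ℝ} (hc : c ∈ Cp ∪ Cm)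
    (hd : d ∈ Cp ∪ Cm) (hcd : c < d) : 0 < ∫ r in Ioo 0 d, deriv w r ^ 2 * r := by
  obtain ⟨u, v, huv, hsub, hne⟩ := hw.exists_Ioo_deriv_ne_zero hc hd hcd
  have hc0 := (hw.union_subset_Ioo hc).1
  have hd1 := (hw.union_subset_Ioo hd).2
  rw [setIntegral_pos_iff_support_of_nonneg_ae
    ((ae_restrict_iff' measurableSet_Ioo).2 (ae_of_all _ fun r hr => by
      have := hr.1; positivity))
    (hw.integrableOn.mono_set (Ioo_subset_Ioo_right hd1.le))]
  refine (Measure.measure_Ioo_pos _ |>.2 huv).trans_le (measure_mono fun r hr => ⟨?_, ?_⟩)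
  · exact mul_ne_zero (pow_ne_zero 2 (hne r hr)) (hc0.trans (hsub hr).1).ne'
  · exact ⟨hc0.trans (hsub hr).1, (hsub hr).2⟩

lemma deriv_eq_zero_of_Ioo_zero_gap (hw : IsSignedTower Cp Cm w) {a : ℝ} (ha : 0 < a)
    (hgap : Ioo 0 a ⊆ Ioo 0 1 \ (Cp ∪ Cm)) {r : ℝ} (hr : r ∈ Ioo 0 a) : deriv w r = 0 := by
  obtain ⟨A, B, hAB⟩ := hw.2.2.2.2.2.2.2.2.2.2.1 0 a ha hgap
  have hderiv : ∀ s ∈ Ioo 0 a, deriv w s = -B / s := fun s hs =>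
    deriv_eq_neg_div_of_eqOn_Ioo hAB hs hs.1.ne'
  have hB : B ^ 2 = 0 := by
    refine eq_zero_of_integrableOn_Ioo_zero_mul_inv ha <|
      (hw.integrableOn.mono_set (hgap.trans sdiff_subset)).congr_fun
        (fun s hs => ?_) measurableSet_Ioo
    simp only [hderiv s hs]
    field_simp
  rw [hderiv r hr, pow_eq_zero_iff two_ne_zero |>.1 hB, neg_zero, zero_div]

lemma integral_Ioo_zero_sSup_eq_zero_iff (hw : IsSignedTower Cp Cm w) :
    ∫ r in Ioo 0 (sSup (Cp ∪ Cm)), deriv w r ^ 2 * r = 0 ↔ ∃ t, Cp ∪ Cm = {t} := by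
  constructor
  · intro h
    refine ⟨_, eq_singleton_iff_unique_mem.2 ⟨hw.sSup_mem, fun c hc => ?_⟩⟩
    by_contra hcb
    exact (hw.integral_pos_of_lt hc hw.sSup_mem ((hw.le_sSup hc).lt_of_ne hcb)).ne' h
  · rintro ⟨t, ht⟩
    have hb := hw.union_subset_Ioo hw.sSup_mem
    have hC : Cp ∪ Cm = {sSup (Cp ∪ Cm)} := by rw [ht, csSup_singleton]
    have hgap : Ioo 0 (sSup (Cp ∪ Cm)) ⊆ Ioo 0 1 \ (Cp ∪ Cm) := fun r hr => by
      refine ⟨⟨hr.1, hr.2.trans hb.2⟩, fun hrC => ?_⟩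
      rw [hC, mem_singleton_iff] at hrC
      exact hr.2.ne hrC
    refine setIntegral_eq_zero_of_forall_eq_zero fun r hr => ?_
    rw [hw.deriv_eq_zero_of_Ioo_zero_gap hb.1 hgap hr]
    ring

end IsSignedTower

/-- Any Moser-Carleson-Chang tower `μ_{C₊,C₋}` satisfies `‖∇μ_{C₊,C₋}‖₂² ≥ 1`, with
equality if and only if `C = C₊ ∪ C₋` consists of a single point. -/
theorem signedTower_energy_ge_one (Cp Cm : Set ℝ) (w : ℝ → ℝ)
    (hw : IsSignedTower Cp Cm w) :
    1 ≤ 2 * π * ∫ r in Set.Ioo (0:ℝ) 1, (deriv w r) ^ 2 * r ∧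
    (2 * π * ∫ r in Set.Ioo (0:ℝ) 1, (deriv w r) ^ 2 * r = 1 ↔
      ∃ t : ℝ, Cp ∪ Cm = {t}) := by
  have hnonneg : 0 ≤ ∫ r in Ioo 0 (sSup (Cp ∪ Cm)), deriv w r ^ 2 * r :=
    setIntegral_nonneg measurableSet_Ioo fun r hr => by have := hr.1; positivity
  rw [hw.energy_eq, ← hw.integral_Ioo_zero_sSup_eq_zero_iff, add_eq_right, mul_eq_zero,
    or_iff_right (by positivity)]
  exact ⟨le_add_of_nonneg_left (by positivity), Iff.rfl⟩
end

section
/- If C = {a₁,…,aₙ} is finite with 0 < a₁ < … < aₙ < 1 and μ_C is the tower on C, then for every radial test function φ, ∫_0^1 μ_C'(r)φ'(r) r dr = Σ_{j=1}^n qⱼ φ(aⱼ), where qⱼ = (1/√(2π)) · (α_{j−1} − α_{j+1})/((αⱼ + α_{j+1})(αⱼ + α_{j−1})) with αⱼ = √(log(1/aⱼ)) (and α₀ = +∞ interpreted as a limit, α_{n+1} = 0). -/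
open Real MeasureTheory Set Finset

lemma gap_integral (w φ : ℝ → ℝ) (hφ : ContDiff ℝ (⊤ : ℕ∞) φ)
    {x y : ℝ} (c d : ℝ) (hx : 0 ≤ x) (hxy : x < y)
    (h : ∀ r ∈ Set.Ioo x y, w r = c + d * Real.log r⁻¹) :
    IntervalIntegrable (fun r => deriv w r * deriv φ r * r) volume x y ∧
      ∫ r in x..y, deriv w r * deriv φ r * r = -d * (φ y - φ x) := by
  have hφ' : Continuous (deriv φ) := hφ.continuous_deriv (by simp)
  have key : ∀ r ∈ Set.Ioo x y, deriv w r * deriv φ r * r = -d * deriv φ r := by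
    intro r hr
    have hr0 : 0 < r := lt_of_le_of_lt hx hr.1
    have heq : w =ᶠ[nhds r] fun t => c + d * Real.log t⁻¹ := by
      filter_upwards [Ioo_mem_nhds hr.1 hr.2] with t ht using h t ht
    have h2 : HasDerivAt (fun t : ℝ => Real.log t⁻¹) (-r⁻¹) r := by
      have := (Real.hasDerivAt_log hr0.ne').neg
      have he : (fun t : ℝ => Real.log t⁻¹) = fun t => -Real.log t := by
        funext t; rw [Real.log_inv]
      rw [he]; exact this
    have hder : HasDerivAt (fun t : ℝ => c + d * Real.log t⁻¹) (d * (-r⁻¹)) r :=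
      (h2.const_mul d).const_add c
    have hdw : deriv w r = d * (-r⁻¹) := by rw [heq.deriv_eq]; exact hder.deriv
    rw [hdw]; field_simp
  have hae : ∀ᵐ r ∂(volume : Measure ℝ), r ∈ Set.uIoc x y →
      deriv w r * deriv φ r * r = -d * deriv φ r := by
    have hy : ∀ᵐ r ∂(volume : Measure ℝ), r ≠ y := by
      rw [ae_iff]; simpa using (by simp : (volume : Measure ℝ) {y} = 0)
    filter_upwards [hy] with r hr hmem
    rw [Set.uIoc_of_le hxy.le] at hmem
    exact key r ⟨hmem.1, lt_of_le_of_ne hmem.2 hr⟩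
  have hint : IntervalIntegrable (fun r => -d * deriv φ r) volume x y :=
    (continuous_const.mul hφ').intervalIntegrable x y
  have hII : IntervalIntegrable (fun r => deriv w r * deriv φ r * r) volume x y := by
    rw [intervalIntegrable_iff] at hint ⊢
    have hres : ∀ᵐ r ∂(volume.restrict (Set.uIoc x y)),
        deriv w r * deriv φ r * r = -d * deriv φ r :=
      (ae_restrict_iff' measurableSet_uIoc).mpr hae
    exact hint.congr (hres.mono fun r hr => hr.symm)
  refine ⟨hII, ?_⟩
  rw [intervalIntegral.integral_congr_ae hae, intervalIntegral.integral_const_mul,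
    intervalIntegral.integral_deriv_eq_sub
      (fun t _ => (hφ.differentiable (by simp)).differentiableAt)
      (hφ'.intervalIntegrable x y)]

/-- For a finite set `C = {a₁,…,aₙ} ⊂ (0,1)` with tower `μ_C` (constant on `(0,a₁]`,
affine in `log(1/r)` on each gap `[aⱼ,a_{j+1}]` and on `[aₙ,1]`, with
`μ_C(aⱼ) = √(log(1/aⱼ)/(2π)) = αⱼ/√(2π)`), one has for every radial test function `φ`:
`∫_0^1 μ_C'(r)φ'(r) r dr = Σ_{j=1}^n qⱼ φ(aⱼ)` where
`qⱼ = (1/√(2π)) (α_{j−1} − α_{j+1})/((αⱼ + α_{j+1})(αⱼ + α_{j−1}))` for `j ≥ 2`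
(with `α_{n+1} = 0`), and `q₁ = (1/√(2π))/(α₁ + α₂)` (the limit form as `α₀ → +∞`). -/
theorem distributional_laplacian_finite_tower (n : ℕ) (hn : 1 ≤ n) (a : ℕ → ℝ)
    (hmem : ∀ i, 1 ≤ i → i ≤ n → a i ∈ Set.Ioo (0:ℝ) 1)
    (hmono : ∀ i, 1 ≤ i → i < n → a i < a (i + 1))
    (α : ℕ → ℝ)
    (hα : ∀ j, α j = if 1 ≤ j ∧ j ≤ n then Real.sqrt (Real.log (a j)⁻¹) else 0)
    (w : ℝ → ℝ)
    (hw0 : ∀ r ∈ Set.Ioc (0:ℝ) (a 1), w r = α 1 / Real.sqrt (2 * π))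
    (hwgap : ∀ j, 1 ≤ j → j < n → ∀ r ∈ Set.Icc (a j) (a (j + 1)),
      w r = (1 / Real.sqrt (2 * π)) *
        ((α j * α (j + 1) + Real.log r⁻¹) / (α j + α (j + 1))))
    (hwlast : ∀ r ∈ Set.Icc (a n) (1:ℝ),
      w r = Real.log r⁻¹ / (Real.sqrt (2 * π) * α n)) :
    ∀ φ : ℝ → ℝ, ContDiff ℝ (⊤ : ℕ∞) φ → tsupport φ ⊆ Set.Ioo 0 1 →
      ∫ r in (0:ℝ)..1, deriv w r * deriv φ r * r =
        (1 / Real.sqrt (2 * π)) * (1 / (α 1 + α 2)) * φ (a 1) +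
        ∑ j ∈ Finset.Icc 2 n,
          ((1 / Real.sqrt (2 * π)) *
            ((α (j - 1) - α (j + 1)) /
              ((α j + α (j + 1)) * (α j + α (j - 1))))) * φ (a j) := by
  intro φ hφ hsupp
  have hs : (0:ℝ) < Real.sqrt (2 * π) := Real.sqrt_pos.mpr (by positivity)
  have hαpos : ∀ j, 1 ≤ j → j ≤ n → 0 < α j := by
    intro j h1 h2
    rw [hα j, if_pos ⟨h1, h2⟩]
    have ha := hmem j h1 h2
    exact Real.sqrt_pos.mpr (Real.log_pos ((one_lt_inv₀ ha.1).mpr ha.2))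
  have hαnn : ∀ j, 0 ≤ α j := by
    intro j; rw [hα j]; split
    · exact Real.sqrt_nonneg _
    · exact le_rfl
  -- B j = slope coefficient on gap j
  set B : ℕ → ℝ := fun j => 1 / (Real.sqrt (2 * π) * (α j + α (j + 1))) with hB
  have hαtop : α (n + 1) = 0 := by
    rw [hα, if_neg (by omega)]
  -- gap description for j < n
  have hgapform : ∀ j, 1 ≤ j → j < n → ∀ r ∈ Set.Ioo (a j) (a (j + 1)),
      w r = (1 / Real.sqrt (2 * π)) * (α j * α (j + 1)) / (α j + α (j + 1))
        + B j * Real.log r⁻¹ := by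
    intro j h1 h2 r hr
    have hq : 0 < α j + α (j + 1) := by
      have := hαpos j h1 h2.le; have := hαnn (j + 1); linarith
    rw [hwgap j h1 h2 r ⟨hr.1.le, hr.2.le⟩, hB]
    field_simp
  -- main induction
  have main : ∀ m, 1 ≤ m → m ≤ n →
      IntervalIntegrable (fun r => deriv w r * deriv φ r * r) volume 0 (a m) ∧
      ∫ r in (0:ℝ)..(a m), deriv w r * deriv φ r * r =
        B 1 * φ (a 1) + (∑ j ∈ Finset.Icc 2 m, (B j - B (j - 1)) * φ (a j))
          - B m * φ (a m) := by
    intro m hm1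
    induction m, hm1 using Nat.le_induction with
    | base =>
      intro _
      have h1 := hmem 1 le_rfl hn
      have := gap_integral w φ hφ (α 1 / Real.sqrt (2 * π)) 0 le_rfl h1.1
        (fun r hr => by rw [hw0 r ⟨hr.1, hr.2.le⟩]; ring)
      refine ⟨this.1, ?_⟩
      rw [this.2]
      simp [Finset.Icc_eq_empty (show ¬ (2:ℕ) ≤ 1 by omega)]
    | succ m hm ih =>
      intro hmn
      have hmn' : m < n := by omega
      obtain ⟨ihI, ihE⟩ := ih hmn'.le
      have ham := hmem m hm hmn'.le
      have hlt := hmono m hm hmn'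
      have hgap := gap_integral w φ hφ
        ((1 / Real.sqrt (2 * π)) * (α m * α (m + 1)) / (α m + α (m + 1))) (B m)
        ham.1.le hlt (hgapform m hm hmn')
      refine ⟨ihI.trans hgap.1, ?_⟩
      rw [← intervalIntegral.integral_add_adjacent_intervals ihI hgap.1, ihE, hgap.2,
        Finset.sum_Icc_succ_top (show 2 ≤ m + 1 by omega)]
      simp only [Nat.add_sub_cancel]
      ring
  obtain ⟨mI, mE⟩ := main n hn le_rfl
  have han := hmem n hn le_rfl
  have hlast := gap_integral w φ hφ 0 (B n) han.1.le han.2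
    (fun r hr => by
      rw [hwlast r ⟨hr.1.le, hr.2.le⟩]
      simp only [hB, hαtop, add_zero, zero_add]
      ring)
  have hφ1 : φ 1 = 0 := by
    apply image_eq_zero_of_notMem_tsupport
    intro h; exact absurd (hsupp h) (by simp)
  rw [← intervalIntegral.integral_add_adjacent_intervals mI hlast.1, mE, hlast.2, hφ1]
  have hB1 : B 1 = 1 / Real.sqrt (2 * π) * (1 / (α 1 + α 2)) := by
    rw [hB]; field_simp
  rw [hB1]
  have hsum : ∀ j ∈ Finset.Icc 2 n, (B j - B (j - 1)) * φ (a j) =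
      ((1 / Real.sqrt (2 * π)) *
        ((α (j - 1) - α (j + 1)) /
          ((α j + α (j + 1)) * (α j + α (j - 1))))) * φ (a j) := by
    intro j hj
    rw [Finset.mem_Icc] at hj
    have hqj := hαpos j (by omega) hj.2
    have hqj1 := hαpos (j - 1) (by omega) (by omega)
    have hnn := hαnn (j + 1)
    have h1 : (0:ℝ) < α j + α (j + 1) := by linarith
    have h2 : (0:ℝ) < α j + α (j - 1) := by linarith
    have hjj : j - 1 + 1 = j := by omega
    rw [hB]
    simp only [hjj]
    congr 1
    field_simp
    ring
  rw [Finset.sum_congr rfl hsum]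
  ring
end

section
/- If g: ℝ → ℝ is continuously differentiable, satisfies lim_{|s|→∞} g'(s)/(g(s)s) = 0, and there is T > 0 with inf_{s≥T} g(s) > 0 and sup_{s≤−T} g(s) < 0, then lim_{|s|→∞} (log|g(s)|)/s² = 0. -/
/-!
Away from a compact set `g` does not vanish, so `log |g|` is differentiable there with derivative
`g' / g = (g' / (g s)) · s = o(s)`. A function whose derivative is `o(s)` is `o(s²)`: by the mean
value theorem `|f s - f a| ≤ ε s (s - a)` once `|f'| ≤ ε |·|` on `[a, s]`.
-/

open Real Filter Topology Asymptotics

namespace Asymptotics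

theorem isLittleO_sq_atTop_of_hasDerivAt {f f' : ℝ → ℝ}
    (hf : ∀ᶠ x in atTop, HasDerivAt f (f' x) x) (hf' : f' =o[atTop] fun x => x) :
    f =o[atTop] fun x => x ^ 2 := by
  refine isLittleO_iff.2 fun c hc => ?_
  obtain ⟨a, ha⟩ := eventually_atTop.1 <|
    (hf.and (isLittleO_iff.1 hf' (half_pos hc))).and (eventually_ge_atTop 0)
  have ha₀ : 0 ≤ a := (ha a le_rfl).2
  have hfa : ∀ᶠ x in atTop, ‖f a‖ ≤ c / 2 * x ^ 2 :=
    ((tendsto_pow_atTop two_ne_zero).const_mul_atTop (half_pos hc)).eventually_ge_atTop _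
  filter_upwards [eventually_ge_atTop a, hfa] with x hax hfa
  have hmvt : ‖f x - f a‖ ≤ c / 2 * x * (x - a) := by
    refine norm_image_sub_le_of_norm_deriv_le_segment'
      (fun y hy => (ha y hy.1).1.1.hasDerivWithinAt) (fun y hy => ?_) x ⟨hax, le_rfl⟩
    have hy₀ : 0 ≤ y := ha₀.trans hy.1
    calc ‖f' y‖ ≤ c / 2 * ‖y‖ := (ha y hy.1).1.2
      _ ≤ c / 2 * x := by
        rw [Real.norm_of_nonneg hy₀]; gcongr; exact hy.2.le
  calc ‖f x‖ ≤ ‖f a‖ + ‖f x - f a‖ := norm_le_norm_add_norm_sub' _ _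
    _ ≤ c / 2 * x ^ 2 + c / 2 * x * (x - a) := add_le_add hfa hmvt
    _ ≤ c * ‖x ^ 2‖ := by
      rw [Real.norm_of_nonneg (sq_nonneg x)]
      nlinarith [mul_nonneg (mul_nonneg hc.le (ha₀.trans hax)) ha₀]

theorem isLittleO_sq_atBot_of_hasDerivAt {f f' : ℝ → ℝ}
    (hf : ∀ᶠ x in atBot, HasDerivAt f (f' x) x) (hf' : f' =o[atBot] fun x => x) :
    f =o[atBot] fun x => x ^ 2 := by
  have hneg : (fun x => f (-x)) =o[atTop] fun x => x ^ 2 := by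
    refine isLittleO_sq_atTop_of_hasDerivAt (f' := fun x => f' (-x) * -1) ?_ ?_
    · filter_upwards [tendsto_neg_atTop_atBot.eventually hf] with x hx
      exact hx.comp x (hasDerivAt_neg x)
    · simpa [Function.comp_def] using (hf'.comp_tendsto tendsto_neg_atTop_atBot).neg_left.neg_right
  simpa [Function.comp_def] using hneg.comp_tendsto tendsto_neg_atBot_atTop

theorem isLittleO_sq_cocompact_of_hasDerivAt {f f' : ℝ → ℝ}
    (hf : ∀ᶠ x in cocompact ℝ, HasDerivAt f (f' x) x) (hf' : f' =o[cocompact ℝ] fun x => x) :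
    f =o[cocompact ℝ] fun x => x ^ 2 := by
  rw [cocompact_eq_atBot_atTop, eventually_sup] at hf
  rw [cocompact_eq_atBot_atTop] at hf' ⊢
  exact (isLittleO_sq_atBot_of_hasDerivAt hf.1 (hf'.mono le_sup_left)).sup
    (isLittleO_sq_atTop_of_hasDerivAt hf.2 (hf'.mono le_sup_right))

end Asymptotics

/-- If `g : ℝ → ℝ` is `C¹`, satisfies `g'(s)/(g(s)s) → 0` as `|s| → ∞` (condition (g0)),
and there is `T > 0` with `inf_{s ≥ T} g(s) > 0` and `sup_{s ≤ −T} g(s) < 0`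
(condition (g1)), then `log|g(s)|/s² → 0` as `|s| → ∞`. -/
theorem log_g_over_sq_tendsto_zero (g : ℝ → ℝ) (hg : ContDiff ℝ 1 g)
    (h0 : Tendsto (fun s => deriv g s / (g s * s)) (Filter.cocompact ℝ) (𝓝 0))
    (h1 : ∃ T > (0:ℝ), (∃ c > (0:ℝ), ∀ s ≥ T, c ≤ g s) ∧
      (∃ c > (0:ℝ), ∀ s ≤ -T, g s ≤ -c)) :
    Tendsto (fun s => Real.log |g s| / s ^ 2) (Filter.cocompact ℝ) (𝓝 0) := by
  obtain ⟨T, -, ⟨c₁, hc₁, hg₁⟩, ⟨c₂, hc₂, hg₂⟩⟩ := h1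
  have hg_ne : ∀ᶠ s in cocompact ℝ, g s ≠ 0 := by
    filter_upwards [tendsto_norm_cocompact_atTop.eventually_ge_atTop T] with s hs
    rcases le_abs'.1 (Real.norm_eq_abs s ▸ hs) with hs | hs
    · linarith [hg₂ s hs]
    · linarith [hg₁ s hs]
  have hlog : ∀ᶠ s in cocompact ℝ, HasDerivAt (fun s => Real.log |g s|) (deriv g s / g s) s := by
    filter_upwards [hg_ne] with s hs
    simpa only [Real.log_abs] using
      ((hg.differentiable one_ne_zero s).hasDerivAt).log hs
  have hlog' : (fun s => deriv g s / g s) =o[cocompact ℝ] fun s => s := by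
    refine (((isLittleO_one_iff ℝ).2 h0).mul_isBigO (isBigO_refl (fun s => s) _)).congr' ?_ ?_
    · filter_upwards [tendsto_norm_cocompact_atTop.eventually_gt_atTop 0] with s hs
      rw [div_mul_eq_mul_div, mul_div_mul_right _ _ (norm_pos_iff.1 hs)]
    · exact .of_eq (funext fun s => one_mul s)
  exact (isLittleO_sq_cocompact_of_hasDerivAt hlog hlog').tendsto_div_nhds_zero
end
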